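/- Let γ ∈ (0,1) be irrational, and write γ = j₀/q + γ̃ with j₀ ∈ {0,…,q−1} and γ̃ ∈ (0,1/q). Let τ be a permutation of {1,…,q} and let x ∈ [0,1/q). Then for every i ∈ {1,…,q}: (a) if x < γ̃, then (R_γ ∘ E_τ ∘ R_{−γ})(x + (i−1)/q) = x + (π(i)−1)/q in ℝ/ℤ, where π = σ^{j₀+1} τ σ^{−(j₀+1)}; (b) if x ≥ γ̃, then (R_γ ∘ E_τ ∘ R_{−γ})(x + (i−1)/q) = x + (π(i)−1)/q, where π = σ^{j₀} τ σ^{−j₀}. -/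

import Mathlib

open Equiv

noncomputable section

/-- The circle `ℝ/ℤ`. -/
abbrev Circ : Type := AddCircle (1 : ℝ)

/-- Rotation by `a` : the bijection `x ↦ x + a` of the circle. -/
def Rot (a : Circ) : Equiv.Perm Circ := Equiv.addRight a

/-- The subgroup `{ p/q mod 1 : p ∈ ℤ }` of the circle. -/
def RatPts (q : ℕ) : AddSubgroup Circ :=
  AddSubgroup.zmultiples (((q : ℝ)⁻¹ : ℝ) : Circ)

/-- The group of bijections of the circle all of whose displacements lie in `RatPts q`. -/
def Delta (q : ℕ) : Subgroup (Equiv.Perm Circ) where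
  carrier := {f | ∀ x : Circ, f x - x ∈ RatPts q}
  one_mem' := by intro x; simpa using zero_mem (RatPts q)
  mul_mem' := by
    intro f g hf hg x
    have h1 : f (g x) - g x ∈ RatPts q := hf (g x)
    have h2 : g x - x ∈ RatPts q := hg x
    have h3 := add_mem h1 h2
    simpa [Equiv.Perm.mul_apply, sub_add_sub_cancel] using h3
  inv_mem' := by
    intro f hf x
    have h1 : f (f⁻¹ x) - f⁻¹ x ∈ RatPts q := hf (f⁻¹ x)
    rw [← Equiv.Perm.mul_apply, mul_inv_cancel, Equiv.Perm.one_apply] at h1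
    simpa using neg_mem h1

/-- The subgroup `A` of the circle generated by the classes of `α₁, …, α_s`. -/
def Agrp (s : ℕ) (α : Fin s → ℝ) : AddSubgroup Circ :=
  AddSubgroup.closure (Set.range fun i => ((α i : ℝ) : Circ))

/-- The group `H` generated by the rotations `R_{αᵢ}` and the maps `E_{τⱼ}`. -/
def Hgrp (s m q : ℕ) (α : Fin s → ℝ) (τs : Fin m → Equiv.Perm (Fin q))
    (E : Equiv.Perm (Fin q) → Equiv.Perm Circ) : Subgroup (Equiv.Perm Circ) :=
  Subgroup.closure ((Set.range fun i => Rot ((α i : ℝ) : Circ)) ∪ (Set.range fun j => E (τs j)))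

/-- The group `Q` generated by the maps `E_{τⱼ}`. -/
def Qgrp (m q : ℕ) (τs : Fin m → Equiv.Perm (Fin q))
    (E : Equiv.Perm (Fin q) → Equiv.Perm Circ) : Subgroup (Equiv.Perm Circ) :=
  Subgroup.closure (Set.range fun j => E (τs j))

/-- The subgroup `𝔖(Q)` of `S_q` generated by `τ₁, …, τ_m`. -/
def SQgrp (m q : ℕ) (τs : Fin m → Equiv.Perm (Fin q)) : Subgroup (Equiv.Perm (Fin q)) :=
  Subgroup.closure (Set.range τs)

/-- The subgroup `W = ⟨σ, τ₁, …, τ_m⟩` of `S_q`, where `σ` is the `q`-cycle. -/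
def Wgrp (m q : ℕ) (τs : Fin m → Equiv.Perm (Fin q)) : Subgroup (Equiv.Perm (Fin q)) :=
  Subgroup.closure ({finRotate q} ∪ Set.range τs)

/-! Write `e k = k/q` in `ℝ/ℤ` for `k ∈ Fin q`, so `E_τ (e k + t) = e (τ k) + t` for `t ∈ [0, 1/q)`.
Since `σ` is the shift `k ↦ k + 1 mod q`, we have `e (σ^m k) = e k + m/q`; hence `E_τ`, read on the
grid shifted by `-m/q`, acts as the conjugate `σ^m τ σ^{-m}`. Writing `x + e i - γ = e i + t - m/q`
with `t ∈ [0, 1/q)` forces `m = j₀ + 1` when `x < γ̃` (then `t = x + 1/q - γ̃`) and `m = j₀` when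
`x ≥ γ̃` (then `t = x - γ̃`). -/

open Fin.NatCast in
lemma finRotate_pow_apply {n : ℕ} [NeZero n] (m : ℕ) (i : Fin n) :
    (finRotate n ^ m) i = i + (m : Fin n) := by
  induction m with
  | zero => simp
  | succ m ih =>
    rw [pow_succ', Perm.mul_apply, ih, finRotate_apply, Nat.cast_succ, add_assoc]

lemma coe_natCast_eq_zero (k : ℕ) : ((k : ℝ) : Circ) = 0 :=
  (AddCircle.coe_eq_zero_iff 1).2 ⟨k, by simp⟩

lemma coe_natMod_div (a n : ℕ) :
    ((((a % n : ℕ) : ℝ) / n : ℝ) : Circ) = (((a : ℝ) / n : ℝ) : Circ) := by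
  rcases eq_or_ne n 0 with rfl | hn
  · simp
  have hsplit : (a : ℝ) = (a % n : ℕ) + n * (a / n : ℕ) := by
    exact_mod_cast (Nat.mod_add_div a n).symm
  rw [hsplit, add_div, mul_div_cancel_left₀ _ (Nat.cast_ne_zero.2 hn), AddCircle.coe_add,
    coe_natCast_eq_zero, add_zero]

lemma coe_finRotate_pow_apply_div {n : ℕ} (m : ℕ) (i : Fin n) :
    (((((finRotate n ^ m) i : ℕ) : ℝ) / n : ℝ) : Circ) =
      ((((i : ℕ) : ℝ) / n + m / n : ℝ) : Circ) := by
  have := i.neZero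
  rw [finRotate_pow_apply, Fin.val_add, Fin.val_natCast, Nat.add_mod_mod, coe_natMod_div,
    Nat.cast_add, add_div]

lemma apply_sub_div_eq_conj_finRotate_pow {q : ℕ} (E : Perm (Fin q) → Perm Circ)
    (hE : ∀ (τ : Perm (Fin q)) (i : Fin q) (t : ℝ), 0 ≤ t → t < 1 / q →
      E τ ((((i : ℕ) : ℝ) / q + t : ℝ) : Circ) = ((((τ i : ℕ) : ℝ) / q + t : ℝ) : Circ))
    (τ : Perm (Fin q)) (m : ℕ) (i : Fin q) {t : ℝ} (ht0 : 0 ≤ t) (ht1 : t < 1 / q) :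
    E τ ((((i : ℕ) : ℝ) / q + t - m / q : ℝ) : Circ) =
      (((((finRotate q ^ m * τ * (finRotate q ^ m)⁻¹) i : ℕ) : ℝ) / q + t - m / q : ℝ) : Circ) := by
  have hshift : ∀ k : Fin q, (((((finRotate q ^ m) k : ℕ) : ℝ) / q + t - m / q : ℝ) : Circ) =
      ((((k : ℕ) : ℝ) / q + t : ℝ) : Circ) := by
    intro k
    rw [AddCircle.coe_sub, AddCircle.coe_add, coe_finRotate_pow_apply_div, ← AddCircle.coe_add,
      ← AddCircle.coe_sub, add_right_comm, add_sub_cancel_right]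
  obtain ⟨k, rfl⟩ : ∃ k, (finRotate q ^ m) k = i :=
    ⟨(finRotate q ^ m)⁻¹ i, by simp only [Perm.coe_inv, apply_symm_apply]⟩
  simp only [Perm.mul_apply, Perm.coe_inv, symm_apply_apply]
  rw [hshift, hshift, hE τ k t ht0 ht1]

lemma rot_mul_mul_rot_neg_apply {q : ℕ} (E : Perm (Fin q) → Perm Circ)
    (hE : ∀ (τ : Perm (Fin q)) (i : Fin q) (t : ℝ), 0 ≤ t → t < 1 / q →
      E τ ((((i : ℕ) : ℝ) / q + t : ℝ) : Circ) = ((((τ i : ℕ) : ℝ) / q + t : ℝ) : Circ))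
    (τ : Perm (Fin q)) (m : ℕ) {γ x t : ℝ} (ht0 : 0 ≤ t) (ht1 : t < 1 / q)
    (hγ : γ = m / q + x - t) (i : Fin q) :
    (Rot (γ : Circ) * E τ * Rot ((-γ : ℝ) : Circ)) ((x + ((i : ℕ) : ℝ) / q : ℝ) : Circ) =
      ((x + (((finRotate q ^ m * τ * (finRotate q ^ m)⁻¹) i : ℕ) : ℝ) / q : ℝ) : Circ) := by
  have harg : x + ((i : ℕ) : ℝ) / q + -γ = ((i : ℕ) : ℝ) / q + t - m / q := by
    rw [hγ]
    ring
  have hconj : ∀ y : Circ,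
      (Rot (γ : Circ) * E τ * Rot ((-γ : ℝ) : Circ)) y = E τ (y + ((-γ : ℝ) : Circ)) + γ :=
    fun _ => rfl
  rw [hconj, ← AddCircle.coe_add, harg, apply_sub_div_eq_conj_finRotate_pow E hE τ m i ht0 ht1,
    ← AddCircle.coe_add, hγ]
  congr 1
  ring

theorem stmt_7_general
    (q : ℕ)
    (E : Equiv.Perm (Fin q) → Equiv.Perm Circ)
    (hE : ∀ (τ : Equiv.Perm (Fin q)) (i : Fin q) (t : ℝ), 0 ≤ t → t < 1 / q →
      E τ ((((i : ℕ) : ℝ) / q + t : ℝ) : Circ) = ((((τ i : ℕ) : ℝ) / q + t : ℝ) : Circ))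
    (γ : ℝ)
    (j₀ : ℕ)
    (γt : ℝ) (hγt0 : 0 < γt) (hγtq : γt < 1 / q)
    (hγ : γ = (j₀ : ℝ) / q + γt)
    (τ : Equiv.Perm (Fin q)) (x : ℝ) (hx0 : 0 ≤ x) (hxq : x < 1 / q) (i : Fin q) :
    (x < γt →
      (Rot ((γ : ℝ) : Circ) * E τ * Rot ((-γ : ℝ) : Circ))
          ((x + ((i : ℕ) : ℝ) / q : ℝ) : Circ)
        = ((x + (((finRotate q ^ (j₀ + 1) * τ * (finRotate q ^ (j₀ + 1))⁻¹) i : ℕ) : ℝ) / q :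
            ℝ) : Circ)) ∧
    (γt ≤ x →
      (Rot ((γ : ℝ) : Circ) * E τ * Rot ((-γ : ℝ) : Circ))
          ((x + ((i : ℕ) : ℝ) / q : ℝ) : Circ)
        = ((x + (((finRotate q ^ j₀ * τ * (finRotate q ^ j₀)⁻¹) i : ℕ) : ℝ) / q :
            ℝ) : Circ)) := by
  refine ⟨fun hx => ?_, fun hx => ?_⟩
  · refine rot_mul_mul_rot_neg_apply E hE τ (j₀ + 1) (t := x + 1 / q - γt)
      (by linarith) (by linarith) ?_ i
    rw [hγ]
    push_cast
    ring
  · refine rot_mul_mul_rot_neg_apply E hE τ j₀ (t := x - γt) (by linarith) (by linarith) ?_ i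
    rw [hγ]
    ring

theorem stmt_7
    (q : ℕ) (hq : 2 ≤ q)
    (E : Equiv.Perm (Fin q) → Equiv.Perm Circ)
    (hE : ∀ (τ : Equiv.Perm (Fin q)) (i : Fin q) (t : ℝ), 0 ≤ t → t < 1 / q →
      E τ ((((i : ℕ) : ℝ) / q + t : ℝ) : Circ) = ((((τ i : ℕ) : ℝ) / q + t : ℝ) : Circ))
    (γ : ℝ) (hγ0 : 0 < γ) (hγ1 : γ < 1) (hirr : Irrational γ)
    (j₀ : ℕ) (hj₀ : j₀ < q)
    (γt : ℝ) (hγt0 : 0 < γt) (hγtq : γt < 1 / q)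
    (hγ : γ = (j₀ : ℝ) / q + γt)
    (τ : Equiv.Perm (Fin q)) (x : ℝ) (hx0 : 0 ≤ x) (hxq : x < 1 / q) (i : Fin q) :
    (x < γt →
      (Rot ((γ : ℝ) : Circ) * E τ * Rot ((-γ : ℝ) : Circ))
          ((x + ((i : ℕ) : ℝ) / q : ℝ) : Circ)
        = ((x + (((finRotate q ^ (j₀ + 1) * τ * (finRotate q ^ (j₀ + 1))⁻¹) i : ℕ) : ℝ) / q :
            ℝ) : Circ)) ∧
    (γt ≤ x →
      (Rot ((γ : ℝ) : Circ) * E τ * Rot ((-γ : ℝ) : Circ))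
          ((x + ((i : ℕ) : ℝ) / q : ℝ) : Circ)
        = ((x + (((finRotate q ^ j₀ * τ * (finRotate q ^ j₀)⁻¹) i : ℕ) : ℝ) / q :
            ℝ) : Circ)) :=
  stmt_7_general q E hE γ j₀ γt hγt0 hγtq hγ τ x hx0 hxq i
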